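/- Let G be a finite group such that every irreducible complex character of G has degree at most 2. Then G is solvable. -/

import Mathlib

/-!
We show that `G'' = 1`. By Maschke's theorem it suffices that `G''` acts trivially on every
irreducible representation `V`, since the regular representation is a sum of those and is
faithful. If `dim V = 1`, already `G'` acts trivially. If `dim V = 2`, the traceless
endomorphisms of `V` form a representation of odd dimension 3 under conjugation; as a sum of
irreducibles of dimension at most 2 it contains a line, on which `G'` acts trivially. So `G'`
commutes with a nonzero traceless, hence non-scalar, `T`, and the centralizer of a non-scalar
`2 × 2` matrix is the commutative algebra `k[T]`.
-/

open Module

universe u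

theorem MonoidHom.commutator_le_ker_of_commute {G M : Type*} [Group G] [Monoid M]
    (f : G →* M) {H : Subgroup G} (h : ∀ a ∈ H, ∀ b ∈ H, Commute (f a) (f b)) :
    ⁅H, H⁆ ≤ f.ker := by
  refine Subgroup.commutator_le.mpr fun a ha b hb => ?_
  rw [MonoidHom.mem_ker, commutatorElement_def, map_mul, map_mul, map_mul, (h a ha b hb).eq,
    mul_assoc (f b), ← map_mul, mul_inv_cancel, map_one, mul_one, ← map_mul, mul_inv_cancel,
    map_one]

theorem LinearMap.finrank_ker_trace_add_one {k V : Type*} [Field k] [AddCommGroup V] [Module k V]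
    [FiniteDimensional k V] (hV : (finrank k V : k) ≠ 0) :
    finrank k (LinearMap.ker (LinearMap.trace k V)) + 1 = finrank k V ^ 2 := by
  have hsurj : Function.Surjective (LinearMap.trace k V) := fun c =>
    ⟨(c / finrank k V) • LinearMap.id, by simp [div_mul_cancel₀ _ hV]⟩
  have := LinearMap.finrank_range_add_finrank_ker (LinearMap.trace k V)
  rw [LinearMap.range_eq_top.mpr hsurj, finrank_top, finrank_self, finrank_linearMap] at this
  rw [sq]
  omega

namespace Module.End

variable {K V : Type*} [Field K] [AddCommGroup V] [Module K V]

theorem commute_of_finrank_eq_one (hV : finrank K V = 1) (A B : End K V) : Commute A B := by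
  obtain ⟨a, rfl, -⟩ := A.existsUnique_eq_smul_id_of_finrank_eq_one hV
  obtain ⟨b, rfl, -⟩ := B.existsUnique_eq_smul_id_of_finrank_eq_one hV
  exact ((Commute.one_left _).smul_left a).smul_right b

theorem exists_eq_smul_one_add_smul_of_commute (hV : finrank K V = 2) {T A : End K V}
    (hT : ∀ c : K, T ≠ c • 1) (hA : Commute A T) : ∃ a b : K, A = a • 1 + b • T := by
  obtain ⟨v, hv⟩ : ∃ v, LinearIndependent K ![v, T v] := by
    by_contra! h
    obtain ⟨c, hc⟩ := LinearMap.exists_eq_smul_id_of_forall_notLinearIndependent h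
    exact hT c hc
  have : FiniteDimensional K V := .of_finrank_pos (by omega)
  let e := basisOfLinearIndependentOfCardEqFinrank hv (by simp [hV])
  obtain ⟨a, b, hAv⟩ : ∃ a b : K, A v = a • v + b • T v := by
    refine ⟨e.repr (A v) 0, e.repr (A v) 1, ?_⟩
    conv_lhs => rw [← e.sum_repr (A v)]
    simp [e, Fin.sum_univ_two]
  refine ⟨a, b, e.ext fun i => ?_⟩
  fin_cases i
  · simpa [e] using hAv
  · have hATv : A (T v) = T (A v) := congrArg (· v) hA.eq
    simp [e, hATv, hAv]

theorem commute_of_commute_of_finrank_eq_two (hV : finrank K V = 2) {T A B : End K V}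
    (hT : ∀ c : K, T ≠ c • 1) (hA : Commute A T) (hB : Commute B T) : Commute A B := by
  obtain ⟨a, a', rfl⟩ := exists_eq_smul_one_add_smul_of_commute hV hT hA
  obtain ⟨b, b', rfl⟩ := exists_eq_smul_one_add_smul_of_commute hV hT hB
  apply_rules [Commute.add_left, Commute.add_right, Commute.smul_left, Commute.smul_right,
    Commute.one_left, Commute.one_right, Commute.refl]

end Module.End

namespace Representation

variable {k G V : Type*} [Field k] [Group G] [AddCommGroup V] [Module k V]

noncomputable def traceless [FiniteDimensional k V] (ρ : Representation k G V) :
    Subrepresentation (ρ.linHom ρ) where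
  toSubmodule := LinearMap.ker (LinearMap.trace k V)
  apply_mem_toSubmodule g T hT := by
    rw [LinearMap.mem_ker] at hT ⊢
    have : ρ g⁻¹ ∘ₗ ρ g = LinearMap.id := LinearMap.ext (ρ.inv_self_apply g)
    rw [linHom_apply, LinearMap.trace_comp_comm', LinearMap.comp_assoc, this, LinearMap.comp_id, hT]

theorem commute_of_linHom_apply_eq_self (ρ : Representation k G V) {g : G} {T : Module.End k V}
    (h : ρ.linHom ρ g T = T) : Commute (ρ g) T := by
  change ρ g * T = T * ρ g
  conv_rhs => rw [← h]
  ext v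
  simp [linHom_apply, inv_self_apply]

theorem inf_ker_toRepresentation_le_ker {ρ : Representation k G V} {S C : Subrepresentation ρ}
    (h : S.toSubmodule ⊔ C.toSubmodule = ⊤) :
    S.toRepresentation.ker ⊓ C.toRepresentation.ker ≤ ρ.ker := by
  rintro g ⟨hS, hC⟩
  refine MonoidHom.mem_ker.mpr (LinearMap.ext fun v => ?_)
  obtain ⟨s, hs, c, hc, rfl⟩ := Submodule.mem_sup.mp (h ▸ Submodule.mem_top : v ∈ _)
  have hs' := congrArg Subtype.val (LinearMap.congr_fun (MonoidHom.mem_ker.mp hS) ⟨s, hs⟩)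
  have hc' := congrArg Subtype.val (LinearMap.congr_fun (MonoidHom.mem_ker.mp hC) ⟨c, hc⟩)
  simp only [Subrepresentation.toRepresentation, MonoidHom.coe_mk, OneHom.coe_mk,
    LinearMap.coe_restrict_apply, Module.End.one_apply] at hs' hc'
  rw [map_add, hs', hc', Module.End.one_apply]

theorem induction_on_isCompl [Finite G] [NeZero (Nat.card G : k)]
    {P : ∀ (V : Type u) [AddCommGroup V] [Module k V], Representation k G V → Prop}
    (subsingleton : ∀ (V : Type u) [AddCommGroup V] [Module k V] [Subsingleton V]
      (ρ : Representation k G V), P V ρ)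
    (irreducible : ∀ (V : Type u) [AddCommGroup V] [Module k V] [FiniteDimensional k V]
      (ρ : Representation k G V), ρ.IsIrreducible → P V ρ)
    (isCompl : ∀ (V : Type u) [AddCommGroup V] [Module k V] [FiniteDimensional k V]
      (ρ : Representation k G V) (S C : Subrepresentation ρ),
        IsCompl S.toSubmodule C.toSubmodule →
        P _ S.toRepresentation → P _ C.toRepresentation → P V ρ)
    (V : Type u) [AddCommGroup V] [Module k V] [FiniteDimensional k V]
    (ρ : Representation k G V) : P V ρ := by
  induction h : finrank k V using Nat.strong_induction_on generalizing V with
  | _ n ih =>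
  rcases subsingleton_or_nontrivial V with hV | hV
  · exact subsingleton V ρ
  by_cases hirr : ρ.IsIrreducible
  · exact irreducible V ρ hirr
  obtain ⟨S, hS_bot, hS_top⟩ : ∃ S : Subrepresentation ρ, S ≠ ⊥ ∧ S ≠ ⊤ := by
    by_contra! hS
    have : Nontrivial (Subrepresentation ρ) :=
      ⟨⊥, ⊤, fun h => bot_ne_top (congrArg Subrepresentation.toSubmodule h :
        (⊥ : Submodule k V) = ⊤)⟩
    exact hirr ⟨fun S => or_iff_not_imp_left.mpr (hS S)⟩
  obtain ⟨C, hSC⟩ := exists_isCompl S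
  have hSC' : IsCompl S.toSubmodule C.toSubmodule := by
    constructor
    · rw [disjoint_iff]; exact congrArg Subrepresentation.toSubmodule hSC.inf_eq_bot
    · rw [codisjoint_iff]; exact congrArg Subrepresentation.toSubmodule hSC.sup_eq_top
  have hC_top : C ≠ ⊤ := fun hC => hS_bot (by simpa [hC] using hSC.inf_eq_bot)
  have lt {T : Subrepresentation ρ} (hT : T ≠ ⊤) : finrank k T.toSubmodule < n :=
    h ▸ Submodule.finrank_lt fun h' => hT (Subrepresentation.toSubmodule_injective h')
  exact isCompl V ρ S C hSC' (ih _ (lt hS_top) _ _ rfl) (ih _ (lt hC_top) _ _ rfl)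

theorem commutator_le_ker_of_finrank_eq_one (ρ : Representation k G V) (hV : finrank k V = 1) :
    commutator G ≤ ρ.ker :=
  MonoidHom.commutator_le_ker_of_commute ρ fun a _ b _ =>
    Module.End.commute_of_finrank_eq_one hV (ρ a) (ρ b)

section IrrepsFinrankLeTwo

variable [Finite G]
  (hG : ∀ (W : Type u) [AddCommGroup W] [Module k W] [FiniteDimensional k W]
    (σ : Representation k G W), σ.IsIrreducible → finrank k W ≤ 2)
include hG

theorem exists_ne_zero_forall_commutator_apply_eq_self [NeZero (Nat.card G : k)]
    {V : Type u} [AddCommGroup V] [Module k V] [FiniteDimensional k V]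
    (ρ : Representation k G V) (hV : Odd (finrank k V)) :
    ∃ v ≠ 0, ∀ g ∈ commutator G, ρ g v = v := by
  revert hV
  refine induction_on_isCompl (P := fun V _ _ ρ => Odd (finrank k V) →
    ∃ v ≠ 0, ∀ g ∈ commutator G, ρ g v = v) ?_ ?_ ?_ V ρ
  · intro V _ _ _ ρ hV
    simp [finrank_zero_of_subsingleton] at hV
  · intro V _ _ _ ρ hρ hV
    have h1 : finrank k V = 1 := by
      have := hG V ρ hρ
      obtain ⟨m, hm⟩ := hV
      omega
    have : Nontrivial V := Module.nontrivial_of_finrank_pos (R := k) (by omega)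
    obtain ⟨v, hv⟩ := exists_ne (0 : V)
    refine ⟨v, hv, fun g hg => ?_⟩
    rw [MonoidHom.mem_ker.mp (commutator_le_ker_of_finrank_eq_one ρ h1 hg), Module.End.one_apply]
  · intro V _ _ _ ρ S C hSC hS hC hV
    have lift (T : Subrepresentation ρ) :
        (∃ v ≠ 0, ∀ g ∈ commutator G, T.toRepresentation g v = v) →
          ∃ v ≠ 0, ∀ g ∈ commutator G, ρ g v = v := by
      rintro ⟨v, hv, hfix⟩
      exact ⟨v, by simpa using hv, fun g hg => congrArg Subtype.val (hfix g hg)⟩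
    rw [← Submodule.finrank_add_eq_of_isCompl hSC] at hV
    rcases Nat.even_or_odd (finrank k S.toSubmodule) with hS' | hS'
    · exact lift C (hC ((Nat.odd_add'.mp hV).mpr hS'))
    · exact lift S (hS hS')

theorem derivedSeries_two_le_ker_of_finrank_eq_two [CharZero k] {V : Type u} [AddCommGroup V]
    [Module k V] (ρ : Representation k G V) (hV : finrank k V = 2) :
    derivedSeries G 2 ≤ ρ.ker := by
  have : FiniteDimensional k V := .of_finrank_pos (by omega)
  have h_odd : Odd (finrank k ρ.traceless.toSubmodule) := by
    have := LinearMap.finrank_ker_trace_add_one (k := k) (V := V) (by simp [hV])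
    rw [hV] at this
    exact ⟨1, by change finrank k (LinearMap.ker (LinearMap.trace k V)) = _; omega⟩
  obtain ⟨⟨T, hT_tr⟩, hT0, hT⟩ :=
    exists_ne_zero_forall_commutator_apply_eq_self hG ρ.traceless.toRepresentation h_odd
  have hT_scalar : ∀ c : k, T ≠ c • 1 := by
    rintro c rfl
    have hc : c = 0 := by simpa [traceless, hV] using hT_tr
    exact hT0 (Subtype.ext (by simp [hc]))
  have hcomm : ∀ g ∈ commutator G, Commute (ρ g) T := fun g hg =>
    ρ.commute_of_linHom_apply_eq_self (congrArg Subtype.val (hT g hg))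
  rw [derivedSeries_succ, derivedSeries_one]
  exact MonoidHom.commutator_le_ker_of_commute ρ fun a ha b hb =>
    Module.End.commute_of_commute_of_finrank_eq_two hV hT_scalar (hcomm a ha) (hcomm b hb)

theorem derivedSeries_two_le_ker_of_finrank_le_two [CharZero k] {V : Type u} [AddCommGroup V]
    [Module k V] [FiniteDimensional k V] (ρ : Representation k G V) (hV : finrank k V ≤ 2) :
    derivedSeries G 2 ≤ ρ.ker := by
  interval_cases h : finrank k V
  · have := finrank_zero_iff.mp h
    exact fun g _ => MonoidHom.mem_ker.mpr (Subsingleton.elim _ _)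
  · exact (derivedSeries_antitone G (by norm_num : 1 ≤ 2)).trans
      (derivedSeries_one G ▸ commutator_le_ker_of_finrank_eq_one ρ h)
  · exact derivedSeries_two_le_ker_of_finrank_eq_two hG ρ h

theorem derivedSeries_two_le_ker [CharZero k] {V : Type u} [AddCommGroup V] [Module k V]
    [FiniteDimensional k V] (ρ : Representation k G V) : derivedSeries G 2 ≤ ρ.ker :=
  induction_on_isCompl (P := fun _ _ _ ρ => derivedSeries G 2 ≤ ρ.ker)
    (fun _ _ _ _ _ _ _ => MonoidHom.mem_ker.mpr (Subsingleton.elim _ _))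
    (fun V _ _ _ ρ hρ => derivedSeries_two_le_ker_of_finrank_le_two hG ρ (hG V ρ hρ))
    (fun _ _ _ _ _ _ _ hSC hS hC =>
      (le_inf hS hC).trans (inf_ker_toRepresentation_le_ker hSC.sup_eq_top))
    V ρ

end IrrepsFinrankLeTwo

theorem ker_ofMulAction_self (k G : Type*) [CommSemiring k] [Nontrivial k] [Group G] :
    (ofMulAction k G G).ker = ⊥ := by
  refine (Subgroup.eq_bot_iff_forall _).mpr fun g hg => ?_
  have := congrArg (· (MonoidAlgebra.single (1 : G) (1 : k))) (MonoidHom.mem_ker.mp hg)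
  simpa [ofMulAction_single, MonoidAlgebra.single_left_inj] using this

end Representation

open CategoryTheory

theorem FDRep.simple_of_isIrreducible {k G V : Type u} [Field k] [IsAlgClosed k] [Group G]
    [Finite G] [NeZero (Nat.card G : k)] [AddCommGroup V] [Module k V] [FiniteDimensional k V]
    (ρ : Representation k G V) [ρ.IsIrreducible] : Simple (FDRep.of ρ) := by
  rw [FDRep.simple_iff_end_is_rank_one,
    ← Representation.IsIrreducible.finrank_intertwiningMap_self ρ]
  exact ((FDRep.forget₂HomLinearEquiv _ _).symm ≪≫ₗ Rep.homLinearEquiv _ _).finrank_eq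

theorem stmt_6 (G : Type) [Group G] [Finite G]
    (h : ∀ V : FDRep ℂ G, Simple V → Module.finrank ℂ V ≤ 2) :
    IsSolvable G := by
  have hG (W : Type) [AddCommGroup W] [Module ℂ W] [FiniteDimensional ℂ W]
      (σ : Representation ℂ G W) (hσ : σ.IsIrreducible) : finrank ℂ W ≤ 2 :=
    h (FDRep.of σ) (FDRep.simple_of_isIrreducible σ)
  have := Representation.derivedSeries_two_le_ker hG (Representation.ofMulAction ℂ G G)
  rw [Representation.ker_ofMulAction_self, le_bot_iff] at this
  exact ⟨2, this⟩
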